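/- Let k > 2, let φ : ℝ → ℂ be a Schwartz function, and let g : [0,∞)² → ℂ be smooth with g(y₁,y₂) = O(y₁^J y₂^{L+1}) near (0,0) and compactly supported. Then ∫₀^∞ ∫₀^∞ φ(y₁² + y₂^k) g(y₁/λ^{1/2}, y₂/λ^{1/k}) dy₁ dy₂ = O(λ^{-J/2 - (L+1)/k}) as λ → +∞. -/
import Mathlib


open MeasureTheory Set

private lemma stmt4_auxA {t c : ℝ} (ht : 0 ≤ t) (htc : t ≤ c) (hc : 1 ≤ c) {n m : ℕ}
    (h : n + 1 ≤ m) : t ^ n * (c ^ m)⁻¹ ≤ c⁻¹ := by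
  have hc0 : (0:ℝ) < c := lt_of_lt_of_le one_pos hc
  rw [← div_eq_mul_inv, ← one_div, div_le_div_iff₀ (by positivity) hc0]
  calc t ^ n * c ≤ c ^ n * c := by
        have := pow_le_pow_left₀ ht htc n
        nlinarith [pow_nonneg ht n]
    _ = c ^ (n + 1) := (pow_succ c n).symm
    _ ≤ c ^ m := pow_le_pow_right₀ hc h
    _ = 1 * c ^ m := (one_mul _).symm

private lemma stmt4_aux_le {t : ℝ} (ht : 0 ≤ t) {k : ℕ} (hk : 1 ≤ k) : t ≤ 1 + t ^ k := by
  rcases le_total t 1 with h | h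
  · have : (0:ℝ) ≤ t ^ k := pow_nonneg ht k
    linarith
  · have h1 : t ≤ t ^ k := le_self_pow₀ h (by omega)
    linarith

private lemma stmt4_aux_inv {t : ℝ} (ht : 0 ≤ t) {k : ℕ} (hk : 2 ≤ k) :
    (1 + t ^ k)⁻¹ ≤ 2 * (1 + t ^ 2)⁻¹ := by
  rcases le_total t 1 with h | h
  · have h1 : (1 + t ^ k)⁻¹ ≤ 1 := by
      apply inv_le_one_of_one_le₀
      have : (0:ℝ) ≤ t ^ k := pow_nonneg ht k
      linarith
    have h2 : 1 + t ^ 2 ≤ 2 := by nlinarith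
    have h3 : (2:ℝ)⁻¹ ≤ (1 + t ^ 2)⁻¹ := inv_anti₀ (by positivity) h2
    linarith
  · have h1 : t ^ 2 ≤ t ^ k := pow_le_pow_right₀ h hk
    have h2 : (1 + t ^ k)⁻¹ ≤ (1 + t ^ 2)⁻¹ :=
      inv_anti₀ (by positivity) (by linarith)
    have h3 : (0:ℝ) ≤ (1 + t ^ 2)⁻¹ := by positivity
    linarith

private lemma stmt4_aux_split (x y : ℝ) (hx : 0 ≤ x) (hy : 0 ≤ y) (m : ℕ) :
    ((1 + (x + y)) ^ (2 * m))⁻¹ ≤ ((1 + x) ^ m * (1 + y) ^ m)⁻¹ := by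
  apply inv_anti₀ (by positivity)
  calc (1 + x) ^ m * (1 + y) ^ m = ((1 + x) * (1 + y)) ^ m := (mul_pow _ _ _).symm
    _ ≤ ((1 + (x + y)) ^ 2) ^ m := pow_le_pow_left₀ (by positivity) (by nlinarith) m
    _ = (1 + (x + y)) ^ (2 * m) := by rw [← pow_mul]

private lemma stmt4_schwartz_bound (φ : SchwartzMap ℝ ℂ) (N : ℕ) :
    ∃ D : ℝ, 0 ≤ D ∧ ∀ x : ℝ, 0 ≤ x → ‖φ x‖ * (1 + x) ^ N ≤ D := by
  obtain ⟨C0, hC0pos, hC0⟩ := φ.decay 0 0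
  obtain ⟨CN, hCNpos, hCN⟩ := φ.decay N 0
  refine ⟨2 ^ N * (C0 + CN), by positivity, fun x hx => ?_⟩
  have h0 : ‖φ x‖ ≤ C0 := by simpa [norm_iteratedFDeriv_zero] using hC0 x
  have hN : x ^ N * ‖φ x‖ ≤ CN := by
    have := hCN x
    simpa [norm_iteratedFDeriv_zero, Real.norm_eq_abs, abs_of_nonneg hx] using this
  have hb : (1 + x) ^ N ≤ 2 ^ N * (1 + x ^ N) := by
    rcases le_total x 1 with h | h
    · calc (1 + x) ^ N ≤ 2 ^ N := pow_le_pow_left₀ (by positivity) (by linarith) N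
        _ ≤ 2 ^ N * (1 + x ^ N) := by
            nlinarith [pow_nonneg hx N, pow_pos (show (0:ℝ) < 2 by norm_num) N]
    · calc (1 + x) ^ N ≤ (2 * x) ^ N := pow_le_pow_left₀ (by positivity) (by linarith) N
        _ = 2 ^ N * x ^ N := mul_pow 2 x N
        _ ≤ 2 ^ N * (1 + x ^ N) := by
            nlinarith [pow_pos (show (0:ℝ) < 2 by norm_num) N]
  calc ‖φ x‖ * (1 + x) ^ N ≤ ‖φ x‖ * (2 ^ N * (1 + x ^ N)) :=
        mul_le_mul_of_nonneg_left hb (norm_nonneg _)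
    _ = 2 ^ N * (‖φ x‖ + x ^ N * ‖φ x‖) := by ring
    _ ≤ 2 ^ N * (C0 + CN) := by
        have h2 : (0:ℝ) ≤ 2 ^ N := by positivity
        nlinarith

set_option maxHeartbeats 2000000 in
/-- Remainder estimate in the degenerate stationary phase expansion: a smooth
compactly supported amplitude `g` vanishing to order `(J, L+1)` at the origin
contributes `O(λ^{-J/2-(L+1)/k})` after the scaling `(y₁/λ^{1/2}, y₂/λ^{1/k})`. -/
theorem stmt4 (k : ℕ) (hk : 2 < k) (J L : ℕ) (φ : SchwartzMap ℝ ℂ)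
    (g : ℝ × ℝ → ℂ) (hg : ContDiff ℝ (⊤ : ℕ∞) g) (hgsupp : HasCompactSupport g)
    (hO : ∃ C δ : ℝ, 0 < δ ∧ ∀ u v : ℝ, 0 ≤ u → 0 ≤ v → u ≤ δ → v ≤ δ →
        ‖g (u, v)‖ ≤ C * u ^ J * v ^ (L + 1)) :
    ∃ M Λ : ℝ, ∀ lam : ℝ, Λ ≤ lam →
      ‖∫ y₁ in Ioi (0 : ℝ), ∫ y₂ in Ioi (0 : ℝ),
          φ (y₁ ^ 2 + y₂ ^ k) * g (y₁ / lam ^ ((1 : ℝ) / 2), y₂ / lam ^ ((1 : ℝ) / k))‖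
        ≤ M * lam ^ (-(J : ℝ) / 2 - ((L : ℝ) + 1) / k) := by
  classical
  obtain ⟨C₀, δ, hδ, hC₀⟩ := hO
  obtain ⟨Cg₀, hCg₀⟩ := hg.continuous.bounded_above_of_compact_support hgsupp
  set Cg : ℝ := max Cg₀ 0 with hCgdef
  have hCg0 : 0 ≤ Cg := le_max_right _ _
  have hCg : ∀ p, ‖g p‖ ≤ Cg := fun p => le_trans (hCg₀ p) (le_max_left _ _)
  set P : ℕ := k * (J + L + 1) with hPdef
  set m : ℕ := 2 * P + L + J + 3 with hmdef
  obtain ⟨D, hD0, hD⟩ := stmt4_schwartz_bound φ (2 * m)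
  set C : ℝ := max C₀ 0 with hCdef
  have hC0 : (0:ℝ) ≤ C := le_max_right _ _
  set C' : ℝ := Cg * δ⁻¹ ^ (2 * P) with hC'def
  have hC'0 : 0 ≤ C' := by
    rw [hC'def]; positivity
  -- combined polynomial bound for g
  have hgbd : ∀ u v : ℝ, 0 ≤ u → 0 ≤ v →
      ‖g (u, v)‖ ≤ C * u ^ J * v ^ (L + 1) + C' * u ^ (2 * P) + C' * v ^ (2 * P) := by
    intro u v hu hv
    by_cases hcase : u ≤ δ ∧ v ≤ δ
    · have h1 : ‖g (u, v)‖ ≤ C₀ * u ^ J * v ^ (L + 1) := hC₀ u v hu hv hcase.1 hcase.2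
      have h2 : C₀ * u ^ J * v ^ (L + 1) ≤ C * u ^ J * v ^ (L + 1) := by
        have hCC : C₀ ≤ C := le_max_left _ _
        have h3 := pow_nonneg hu J
        have h4 := pow_nonneg hv (L + 1)
        have h5 : C₀ * u ^ J ≤ C * u ^ J := mul_le_mul_of_nonneg_right hCC h3
        exact mul_le_mul_of_nonneg_right h5 h4
      have h5 : 0 ≤ C' * u ^ (2 * P) := mul_nonneg hC'0 (pow_nonneg hu _)
      have h6 : 0 ≤ C' * v ^ (2 * P) := mul_nonneg hC'0 (pow_nonneg hv _)
      linarith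
    · have key : Cg ≤ C' * u ^ (2 * P) ∨ Cg ≤ C' * v ^ (2 * P) := by
        push_neg at hcase
        have base : ∀ w : ℝ, δ ≤ w → Cg ≤ C' * w ^ (2 * P) := by
          intro w hw
          have h1 : (1:ℝ) ≤ δ⁻¹ * w := by
            have h2 : δ⁻¹ * δ ≤ δ⁻¹ * w :=
              mul_le_mul_of_nonneg_left hw (inv_nonneg.mpr hδ.le)
            rwa [inv_mul_cancel₀ hδ.ne'] at h2
          have h3 : (1:ℝ) ≤ (δ⁻¹ * w) ^ (2 * P) := one_le_pow₀ h1
          have h4 : (δ⁻¹ * w) ^ (2 * P) = δ⁻¹ ^ (2 * P) * w ^ (2 * P) := mul_pow _ _ _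
          calc Cg = Cg * 1 := (mul_one _).symm
            _ ≤ Cg * ((δ⁻¹ * w) ^ (2 * P)) := mul_le_mul_of_nonneg_left h3 hCg0
            _ = C' * w ^ (2 * P) := by rw [h4, hC'def]; ring
        rcases le_or_gt u δ with h | h
        · exact Or.inr (base v (hcase h).le)
        · exact Or.inl (base u h.le)
      have h5 : 0 ≤ C' * u ^ (2 * P) := mul_nonneg hC'0 (pow_nonneg hu _)
      have h6 : 0 ≤ C' * v ^ (2 * P) := mul_nonneg hC'0 (pow_nonneg hv _)
      have h7 : 0 ≤ C * u ^ J * v ^ (L + 1) := by positivity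
      have h8 := hCg (u, v)
      rcases key with hkey | hkey
      · linarith
      · linarith
  -- the one-variable integrable majorant
  have hGint : Integrable (fun t : ℝ => (1 + t ^ 2)⁻¹) (volume.restrict (Ioi (0:ℝ))) :=
    integrable_inv_one_add_sq.restrict
  set I : ℝ := ∫ t in Ioi (0:ℝ), (1 + t ^ 2)⁻¹ with hIdef
  have hI0 : 0 ≤ I := integral_nonneg fun t => by positivity
  set K : ℝ := 2 * D * (C + 2 * C') with hKdef
  have hK0 : 0 ≤ K := by rw [hKdef]; positivity
  refine ⟨K * I * I, 1, fun lam hlam => ?_⟩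
  have hlam0 : (0:ℝ) < lam := lt_of_lt_of_le one_pos hlam
  set a : ℝ := lam ^ ((1:ℝ) / 2) with hadef
  set b : ℝ := lam ^ ((1:ℝ) / k) with hbdef
  set α : ℝ := lam ^ (-(J : ℝ) / 2 - ((L : ℝ) + 1) / (k : ℝ)) with hαdef
  have hα0 : 0 < α := Real.rpow_pos_of_pos hlam0 _
  have ha0 : 0 < a := Real.rpow_pos_of_pos hlam0 _
  have hb0 : 0 < b := Real.rpow_pos_of_pos hlam0 _
  have hk0 : (0:ℝ) < (k:ℝ) := by positivity
  have hk1 : (1:ℝ) ≤ (k:ℝ) := by exact_mod_cast (by omega : 1 ≤ k)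
  -- rpow arithmetic
  have haJ : a ^ J = lam ^ ((J : ℝ) / 2) := by
    rw [hadef, ← Real.rpow_natCast (lam ^ ((1:ℝ)/2)) J, ← Real.rpow_mul hlam0.le]
    congr 1; ring
  have hbL : b ^ (L + 1) = lam ^ (((L : ℝ) + 1) / k) := by
    rw [hbdef, ← Real.rpow_natCast (lam ^ ((1:ℝ)/k)) (L + 1), ← Real.rpow_mul hlam0.le]
    congr 1; push_cast; ring
  have hab : (a ^ J * b ^ (L + 1))⁻¹ = α := by
    rw [haJ, hbL, ← Real.rpow_add hlam0, ← Real.rpow_neg hlam0.le, hαdef]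
    congr 1; ring
  have hJ2 : (J : ℝ) / 2 ≤ (J : ℝ) := by
    have : (0:ℝ) ≤ (J:ℝ) := Nat.cast_nonneg J
    linarith
  have hLk : ((L : ℝ) + 1) / k ≤ (L : ℝ) + 1 := by
    apply div_le_self (by positivity) hk1
  have ha2P : (a ^ (2 * P))⁻¹ ≤ α := by
    have h1 : a ^ (2 * P) = lam ^ ((P : ℝ)) := by
      rw [hadef, ← Real.rpow_natCast (lam ^ ((1:ℝ)/2)) (2 * P), ← Real.rpow_mul hlam0.le]
      congr 1; push_cast; ring
    rw [h1, ← Real.rpow_neg hlam0.le, hαdef]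
    apply Real.rpow_le_rpow_of_exponent_le hlam
    have h3 : (J : ℝ) + ((L : ℝ) + 1) ≤ (P : ℝ) := by
      rw [hPdef]; push_cast
      nlinarith [hk1, (Nat.cast_nonneg J : (0:ℝ) ≤ (J:ℝ)), (Nat.cast_nonneg L : (0:ℝ) ≤ (L:ℝ))]
    linarith
  have hb2P : (b ^ (2 * P))⁻¹ ≤ α := by
    have h1 : b ^ (2 * P) = lam ^ (((2 * P : ℕ) : ℝ) / k) := by
      rw [hbdef, ← Real.rpow_natCast (lam ^ ((1:ℝ)/k)) (2 * P), ← Real.rpow_mul hlam0.le]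
      congr 1; push_cast; ring
    have hq : ((2 * P : ℕ) : ℝ) / k = 2 * ((J : ℝ) + (L : ℝ) + 1) := by
      rw [hPdef]; push_cast; field_simp
    rw [h1, hq, ← Real.rpow_neg hlam0.le, hαdef]
    apply Real.rpow_le_rpow_of_exponent_le hlam
    have hJ0 : (0:ℝ) ≤ (J:ℝ) := Nat.cast_nonneg J
    have hL0 : (0:ℝ) ≤ (L:ℝ) := Nat.cast_nonneg L
    linarith
  -- pointwise bound
  have hpt : ∀ y₁ y₂ : ℝ, 0 ≤ y₁ → 0 ≤ y₂ →
      ‖φ (y₁ ^ 2 + y₂ ^ k) * g (y₁ / a, y₂ / b)‖ ≤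
        α * (K * (1 + y₁ ^ 2)⁻¹) * (1 + y₂ ^ 2)⁻¹ := by
    intro y₁ y₂ hy₁ hy₂
    have hS : (0:ℝ) ≤ y₁ ^ 2 + y₂ ^ k := by positivity
    have hφS : ‖φ (y₁ ^ 2 + y₂ ^ k)‖ ≤
        D * (((1 + y₁ ^ 2) ^ m * (1 + y₂ ^ k) ^ m)⁻¹) := by
      have h1 : ‖φ (y₁ ^ 2 + y₂ ^ k)‖ ≤ D * ((1 + (y₁ ^ 2 + y₂ ^ k)) ^ (2 * m))⁻¹ := by
        rw [← div_eq_mul_inv, le_div_iff₀ (by positivity)]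
        exact hD _ hS
      refine h1.trans ?_
      exact mul_le_mul_of_nonneg_left
        (stmt4_aux_split (y₁ ^ 2) (y₂ ^ k) (by positivity) (by positivity) m) hD0
    have hgB := hgbd (y₁ / a) (y₂ / b) (by positivity) (by positivity)
    have step1 : ‖φ (y₁ ^ 2 + y₂ ^ k) * g (y₁ / a, y₂ / b)‖ ≤
        (D * (((1 + y₁ ^ 2) ^ m * (1 + y₂ ^ k) ^ m)⁻¹)) *
        (C * (y₁ / a) ^ J * (y₂ / b) ^ (L + 1) + C' * (y₁ / a) ^ (2 * P) +
          C' * (y₂ / b) ^ (2 * P)) := by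
      rw [norm_mul]
      exact mul_le_mul hφS hgB (norm_nonneg _) (by positivity)
    have e1 : C * (y₁ / a) ^ J * (y₂ / b) ^ (L + 1) = α * (C * y₁ ^ J * y₂ ^ (L + 1)) := by
      rw [div_pow, div_pow, ← hab]
      field_simp
    have e2 : C' * (y₁ / a) ^ (2 * P) ≤ α * (C' * y₁ ^ (2 * P)) := by
      rw [div_pow, div_eq_mul_inv]
      calc C' * (y₁ ^ (2 * P) * (a ^ (2 * P))⁻¹) ≤ C' * (y₁ ^ (2 * P) * α) :=
            mul_le_mul_of_nonneg_left
              (mul_le_mul_of_nonneg_left ha2P (pow_nonneg hy₁ _)) hC'0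
        _ = α * (C' * y₁ ^ (2 * P)) := by ring
    have e3 : C' * (y₂ / b) ^ (2 * P) ≤ α * (C' * y₂ ^ (2 * P)) := by
      rw [div_pow, div_eq_mul_inv]
      calc C' * (y₂ ^ (2 * P) * (b ^ (2 * P))⁻¹) ≤ C' * (y₂ ^ (2 * P) * α) :=
            mul_le_mul_of_nonneg_left
              (mul_le_mul_of_nonneg_left hb2P (pow_nonneg hy₂ _)) hC'0
        _ = α * (C' * y₂ ^ (2 * P)) := by ring
    have hresc : C * (y₁ / a) ^ J * (y₂ / b) ^ (L + 1) + C' * (y₁ / a) ^ (2 * P) +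
        C' * (y₂ / b) ^ (2 * P) ≤
        α * (C * y₁ ^ J * y₂ ^ (L + 1) + C' * y₁ ^ (2 * P) + C' * y₂ ^ (2 * P)) := by
      have e4 : α * (C * y₁ ^ J * y₂ ^ (L + 1) + C' * y₁ ^ (2 * P) + C' * y₂ ^ (2 * P)) =
          α * (C * y₁ ^ J * y₂ ^ (L + 1)) + α * (C' * y₁ ^ (2 * P)) + α * (C' * y₂ ^ (2 * P)) := by
        ring
      rw [e4, e1]
      exact add_le_add (add_le_add le_rfl e2) e3
    -- the final product bound
    have hc₁1 : (1:ℝ) ≤ 1 + y₁ ^ 2 := by nlinarith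
    have hc₂1 : (1:ℝ) ≤ 1 + y₂ ^ k := by nlinarith [pow_nonneg hy₂ k]
    have hy₁c : y₁ ≤ 1 + y₁ ^ 2 := by nlinarith
    have hy₂c : y₂ ≤ 1 + y₂ ^ k := stmt4_aux_le hy₂ (by omega)
    have hA1 : y₁ ^ J * ((1 + y₁ ^ 2) ^ m)⁻¹ ≤ (1 + y₁ ^ 2)⁻¹ :=
      stmt4_auxA hy₁ hy₁c hc₁1 (by omega)
    have hA2 : y₂ ^ (L + 1) * ((1 + y₂ ^ k) ^ m)⁻¹ ≤ (1 + y₂ ^ k)⁻¹ :=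
      stmt4_auxA hy₂ hy₂c hc₂1 (by omega)
    have hB1 : y₁ ^ (2 * P) * ((1 + y₁ ^ 2) ^ m)⁻¹ ≤ (1 + y₁ ^ 2)⁻¹ :=
      stmt4_auxA hy₁ hy₁c hc₁1 (by omega)
    have hC2 : y₂ ^ (2 * P) * ((1 + y₂ ^ k) ^ m)⁻¹ ≤ (1 + y₂ ^ k)⁻¹ :=
      stmt4_auxA hy₂ hy₂c hc₂1 (by omega)
    have hB2 : ((1 + y₂ ^ k) ^ m)⁻¹ ≤ (1 + y₂ ^ k)⁻¹ :=
      inv_anti₀ (by positivity) (le_self_pow₀ hc₂1 (by omega))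
    have hC1 : ((1 + y₁ ^ 2) ^ m)⁻¹ ≤ (1 + y₁ ^ 2)⁻¹ :=
      inv_anti₀ (by positivity) (le_self_pow₀ hc₁1 (by omega))
    have hkk : (1 + y₂ ^ k)⁻¹ ≤ 2 * (1 + y₂ ^ 2)⁻¹ := stmt4_aux_inv hy₂ (by omega)
    have hG1 : (0:ℝ) ≤ (1 + y₁ ^ 2)⁻¹ := by positivity
    have hG2 : (0:ℝ) ≤ (1 + y₂ ^ 2)⁻¹ := by positivity
    have t1 : (y₁ ^ J * ((1 + y₁ ^ 2) ^ m)⁻¹) * (y₂ ^ (L + 1) * ((1 + y₂ ^ k) ^ m)⁻¹) ≤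
        (1 + y₁ ^ 2)⁻¹ * (2 * (1 + y₂ ^ 2)⁻¹) :=
      mul_le_mul hA1 (hA2.trans hkk) (by positivity) hG1
    have t2 : (y₁ ^ (2 * P) * ((1 + y₁ ^ 2) ^ m)⁻¹) * (((1 + y₂ ^ k) ^ m)⁻¹) ≤
        (1 + y₁ ^ 2)⁻¹ * (2 * (1 + y₂ ^ 2)⁻¹) :=
      mul_le_mul hB1 (hB2.trans hkk) (by positivity) hG1
    have t3 : (((1 + y₁ ^ 2) ^ m)⁻¹) * (y₂ ^ (2 * P) * ((1 + y₂ ^ k) ^ m)⁻¹) ≤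
        (1 + y₁ ^ 2)⁻¹ * (2 * (1 + y₂ ^ 2)⁻¹) :=
      mul_le_mul hC1 (hC2.trans hkk) (by positivity) hG1
    have hfin : (D * (((1 + y₁ ^ 2) ^ m * (1 + y₂ ^ k) ^ m)⁻¹)) *
        (C * y₁ ^ J * y₂ ^ (L + 1) + C' * y₁ ^ (2 * P) + C' * y₂ ^ (2 * P)) ≤
        (K * (1 + y₁ ^ 2)⁻¹) * (1 + y₂ ^ 2)⁻¹ := by
      have expand : (D * (((1 + y₁ ^ 2) ^ m * (1 + y₂ ^ k) ^ m)⁻¹)) *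
          (C * y₁ ^ J * y₂ ^ (L + 1) + C' * y₁ ^ (2 * P) + C' * y₂ ^ (2 * P)) =
          D * (C * ((y₁ ^ J * ((1 + y₁ ^ 2) ^ m)⁻¹) * (y₂ ^ (L + 1) * ((1 + y₂ ^ k) ^ m)⁻¹))
            + C' * ((y₁ ^ (2 * P) * ((1 + y₁ ^ 2) ^ m)⁻¹) * (((1 + y₂ ^ k) ^ m)⁻¹))
            + C' * ((((1 + y₁ ^ 2) ^ m)⁻¹) * (y₂ ^ (2 * P) * ((1 + y₂ ^ k) ^ m)⁻¹))) := by
        rw [mul_inv]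
        ring
      rw [expand]
      have hsum : C * ((y₁ ^ J * ((1 + y₁ ^ 2) ^ m)⁻¹) * (y₂ ^ (L + 1) * ((1 + y₂ ^ k) ^ m)⁻¹))
            + C' * ((y₁ ^ (2 * P) * ((1 + y₁ ^ 2) ^ m)⁻¹) * (((1 + y₂ ^ k) ^ m)⁻¹))
            + C' * ((((1 + y₁ ^ 2) ^ m)⁻¹) * (y₂ ^ (2 * P) * ((1 + y₂ ^ k) ^ m)⁻¹)) ≤
          (C + 2 * C') * ((1 + y₁ ^ 2)⁻¹ * (2 * (1 + y₂ ^ 2)⁻¹)) := by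
        have b1 := mul_le_mul_of_nonneg_left t1 hC0
        have b2 := mul_le_mul_of_nonneg_left t2 hC'0
        have b3 := mul_le_mul_of_nonneg_left t3 hC'0
        linarith [b1, b2, b3]
      calc D * (C * ((y₁ ^ J * ((1 + y₁ ^ 2) ^ m)⁻¹) * (y₂ ^ (L + 1) * ((1 + y₂ ^ k) ^ m)⁻¹))
            + C' * ((y₁ ^ (2 * P) * ((1 + y₁ ^ 2) ^ m)⁻¹) * (((1 + y₂ ^ k) ^ m)⁻¹))
            + C' * ((((1 + y₁ ^ 2) ^ m)⁻¹) * (y₂ ^ (2 * P) * ((1 + y₂ ^ k) ^ m)⁻¹))) ≤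
          D * ((C + 2 * C') * ((1 + y₁ ^ 2)⁻¹ * (2 * (1 + y₂ ^ 2)⁻¹))) :=
            mul_le_mul_of_nonneg_left hsum hD0
        _ = (K * (1 + y₁ ^ 2)⁻¹) * (1 + y₂ ^ 2)⁻¹ := by rw [hKdef]; ring
    calc ‖φ (y₁ ^ 2 + y₂ ^ k) * g (y₁ / a, y₂ / b)‖ ≤
          (D * (((1 + y₁ ^ 2) ^ m * (1 + y₂ ^ k) ^ m)⁻¹)) *
          (C * (y₁ / a) ^ J * (y₂ / b) ^ (L + 1) + C' * (y₁ / a) ^ (2 * P) +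
            C' * (y₂ / b) ^ (2 * P)) := step1
      _ ≤ (D * (((1 + y₁ ^ 2) ^ m * (1 + y₂ ^ k) ^ m)⁻¹)) *
          (α * (C * y₁ ^ J * y₂ ^ (L + 1) + C' * y₁ ^ (2 * P) + C' * y₂ ^ (2 * P))) :=
            mul_le_mul_of_nonneg_left hresc (by positivity)
      _ = α * ((D * (((1 + y₁ ^ 2) ^ m * (1 + y₂ ^ k) ^ m)⁻¹)) *
          (C * y₁ ^ J * y₂ ^ (L + 1) + C' * y₁ ^ (2 * P) + C' * y₂ ^ (2 * P))) := by ring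
      _ ≤ α * ((K * (1 + y₁ ^ 2)⁻¹) * (1 + y₂ ^ 2)⁻¹) :=
            mul_le_mul_of_nonneg_left hfin hα0.le
      _ = α * (K * (1 + y₁ ^ 2)⁻¹) * (1 + y₂ ^ 2)⁻¹ := by ring
  -- inner integral bound
  have hinner : ∀ y₁ : ℝ, y₁ ∈ Ioi (0:ℝ) →
      ‖∫ y₂ in Ioi (0:ℝ), φ (y₁ ^ 2 + y₂ ^ k) * g (y₁ / a, y₂ / b)‖ ≤
        (α * (K * I)) * (1 + y₁ ^ 2)⁻¹ := by
    intro y₁ hy₁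
    calc ‖∫ y₂ in Ioi (0:ℝ), φ (y₁ ^ 2 + y₂ ^ k) * g (y₁ / a, y₂ / b)‖ ≤
          ∫ y₂ in Ioi (0:ℝ), ‖φ (y₁ ^ 2 + y₂ ^ k) * g (y₁ / a, y₂ / b)‖ :=
        norm_integral_le_integral_norm _
      _ ≤ ∫ y₂ in Ioi (0:ℝ), α * (K * (1 + y₁ ^ 2)⁻¹) * (1 + y₂ ^ 2)⁻¹ := by
          apply integral_mono_of_nonneg
          · exact Filter.Eventually.of_forall fun y₂ => norm_nonneg _
          · exact hGint.const_mul _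
          · filter_upwards [self_mem_ae_restrict measurableSet_Ioi] with y₂ hy₂
            exact hpt y₁ y₂ (le_of_lt hy₁) (le_of_lt hy₂)
      _ = α * (K * (1 + y₁ ^ 2)⁻¹) * I := by
          rw [integral_const_mul]
      _ = (α * (K * I)) * (1 + y₁ ^ 2)⁻¹ := by ring
  -- conclude
  calc ‖∫ y₁ in Ioi (0:ℝ), ∫ y₂ in Ioi (0:ℝ),
        φ (y₁ ^ 2 + y₂ ^ k) * g (y₁ / a, y₂ / b)‖ ≤
      ∫ y₁ in Ioi (0:ℝ), ‖∫ y₂ in Ioi (0:ℝ), φ (y₁ ^ 2 + y₂ ^ k) * g (y₁ / a, y₂ / b)‖ :=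
      norm_integral_le_integral_norm _
    _ ≤ ∫ y₁ in Ioi (0:ℝ), (α * (K * I)) * (1 + y₁ ^ 2)⁻¹ := by
        apply integral_mono_of_nonneg
        · exact Filter.Eventually.of_forall fun y₁ => norm_nonneg _
        · exact hGint.const_mul _
        · filter_upwards [self_mem_ae_restrict measurableSet_Ioi] with y₁ hy₁
          exact hinner y₁ hy₁
    _ = (α * (K * I)) * I := by rw [integral_const_mul]
    _ = K * I * I * α := by ring
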